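/- arXiv:2604.11063 — 2 statements merged into one kernel-verified Lean document; each statement's English description precedes it below -/
import Mathlib

section
/- Let γ > −1 be a real number and let L_n denote the Laguerre polynomial of degree n. Then for all natural numbers n, m: ∫₀¹ L_n(−(γ+1)·log x)·L_m(−(γ+1)·log x)·x^γ dx = 1/(γ+1) if n = m and 0 otherwise. That is, the Log-Orthogonal Functions S_n^γ(x) := L_n(−(γ+1)·log x) are orthogonal in L²((0,1), x^γ dx) with constant norm 1/(γ+1). -/
open MeasureTheory
open Finset

lemma alt_real (N : ℕ) :
    ∑ i ∈ range (N + 1), (-1 : ℝ) ^ i * (N.choose i) = if N = 0 then 1 else 0 := by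
  have h := @Int.alternating_sum_range_choose N
  have h2 : ((∑ i ∈ range (N + 1), ((-1) ^ i * N.choose i : ℤ)) : ℝ)
      = ((if N = 0 then 1 else 0 : ℤ) : ℝ) := by exact_mod_cast h
  push_cast at h2
  simpa using h2

lemma alt_sum_A (n m : ℕ) :
    ∑ j ∈ range (n + 1), (-1 : ℝ) ^ j * (n.choose j) * (j.choose m) =
      (-1) ^ n * (if n = m then 1 else 0) := by
  by_cases hmn : m ≤ n
  · have hsub : ∑ j ∈ Ico m (n + 1), (-1 : ℝ) ^ j * (n.choose j) * (j.choose m)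
        = ∑ j ∈ range (n + 1), (-1 : ℝ) ^ j * (n.choose j) * (j.choose m) := by
      refine Finset.sum_subset ?_ ?_
      · intro j hj
        simp only [mem_Ico] at hj
        simp only [mem_range]
        exact hj.2
      · intro j hj hj2
        simp only [mem_range] at hj
        simp only [mem_Ico, not_and, not_lt] at hj2
        have hjm : j < m := by
          by_contra hc
          have := hj2 (le_of_not_gt hc)
          omega
        have hz : j.choose m = 0 := Nat.choose_eq_zero_of_lt hjm
        rw [hz]
        simp
    rw [← hsub, Finset.sum_Ico_eq_sum_range]
    have hrange : n + 1 - m = (n - m) + 1 := by omega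
    rw [hrange]
    have hterm : ∀ i ∈ range (n - m + 1),
        (-1 : ℝ) ^ (m + i) * (n.choose (m + i)) * ((m + i).choose m)
          = ((-1) ^ m * (n.choose m)) * ((-1) ^ i * ((n - m).choose i)) := by
      intro i hi
      simp only [mem_range] at hi
      have h1 : m + i ≤ n := by omega
      have h2 : n.choose (m + i) * (m + i).choose m = n.choose m * (n - m).choose i := by
        have := Nat.choose_mul (n := n) (Nat.le_add_right m i)
        simpa using this
      have h2' : ((n.choose (m + i)) : ℝ) * ((m + i).choose m)
          = (n.choose m : ℝ) * ((n - m).choose i) := by exact_mod_cast h2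
      rw [pow_add, mul_assoc ((-1 : ℝ) ^ m * (-1) ^ i), h2']
      ring
    rw [Finset.sum_congr rfl hterm, ← Finset.mul_sum, alt_real]
    by_cases h : n = m
    · subst h
      simp
    · have h1 : n - m ≠ 0 := by omega
      simp [h1, h]
  · have h0 : ∀ j ∈ range (n + 1), (-1 : ℝ) ^ j * (n.choose j) * (j.choose m) = 0 := by
      intro j hj
      simp only [mem_range] at hj
      have hz : j.choose m = 0 := Nat.choose_eq_zero_of_lt (by omega)
      rw [hz]
      simp
    rw [Finset.sum_congr rfl h0]
    have h1 : n ≠ m := by omega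
    simp [h1]

lemma vandermonde_sq (j k m : ℕ) (hk : k ≤ m) :
    ((j + k).choose k : ℝ) = ∑ a ∈ range (m + 1), (j.choose a : ℝ) * (k.choose a) := by
  have h1 : (j + k).choose k = ∑ a ∈ range (k + 1), j.choose a * k.choose (k - a) := by
    rw [Nat.add_choose_eq]
    rw [Finset.Nat.sum_antidiagonal_eq_sum_range_succ_mk]
  have h2 : ∀ a ∈ range (k + 1), j.choose a * k.choose (k - a) = j.choose a * k.choose a := by
    intro a ha
    simp only [mem_range] at ha
    rw [Nat.choose_symm (by omega : a ≤ k)]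
  have h3 : ∑ a ∈ range (k + 1), j.choose a * k.choose a
      = ∑ a ∈ range (m + 1), j.choose a * k.choose a := by
    refine Finset.sum_subset ?_ ?_
    · intro a ha
      simp only [mem_range] at ha ⊢
      omega
    · intro a ha ha2
      simp only [mem_range] at ha ha2
      have hz : k.choose a = 0 := Nat.choose_eq_zero_of_lt (by omega)
      rw [hz]
      simp
  rw [h1, Finset.sum_congr rfl h2, h3]
  push_cast
  rfl

lemma alt_sum_B (m j : ℕ) :
    ∑ k ∈ range (m + 1), (-1 : ℝ) ^ k * (m.choose k) * ((j + k).choose k) =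
      (-1) ^ m * (j.choose m) := by
  have h : ∀ k ∈ range (m + 1),
      (-1 : ℝ) ^ k * (m.choose k) * ((j + k).choose k)
        = ∑ a ∈ range (m + 1), (j.choose a : ℝ) * ((-1) ^ k * (m.choose k) * (k.choose a)) := by
    intro k hk
    simp only [mem_range] at hk
    rw [vandermonde_sq j k m (by omega), Finset.mul_sum]
    exact Finset.sum_congr rfl fun a _ => by ring
  rw [Finset.sum_congr rfl h, Finset.sum_comm]
  have h2 : ∀ a ∈ range (m + 1),
      ∑ k ∈ range (m + 1), (j.choose a : ℝ) * ((-1) ^ k * (m.choose k) * (k.choose a))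
        = (j.choose a : ℝ) * ((-1) ^ m * (if m = a then 1 else 0)) := by
    intro a _
    rw [← Finset.mul_sum, alt_sum_A m a]
  rw [Finset.sum_congr rfl h2]
  have h3 : ∀ a ∈ range (m + 1),
      (j.choose a : ℝ) * ((-1) ^ m * (if m = a then 1 else 0))
        = if m = a then ((-1 : ℝ)) ^ m * (j.choose a) else 0 := by
    intro a _
    split_ifs <;> ring
  rw [Finset.sum_congr rfl h3,
    Finset.sum_ite_eq (range (m + 1)) m (fun a => ((-1 : ℝ)) ^ m * (j.choose a))]
  simp

lemma key_identity (n m : ℕ) :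
    ∑ j ∈ range (n + 1), ∑ k ∈ range (m + 1),
        (-1 : ℝ) ^ (j + k) * (n.choose j) * (m.choose k) * ((j + k).choose k) =
      if n = m then 1 else 0 := by
  have h : ∀ j ∈ range (n + 1),
      ∑ k ∈ range (m + 1), (-1 : ℝ) ^ (j + k) * (n.choose j) * (m.choose k) * ((j + k).choose k)
        = (-1) ^ m * ((-1) ^ j * (n.choose j) * (j.choose m)) := by
    intro j _
    have h1 : ∀ k ∈ range (m + 1),
        (-1 : ℝ) ^ (j + k) * (n.choose j) * (m.choose k) * ((j + k).choose k)
          = ((-1) ^ j * (n.choose j)) * ((-1) ^ k * (m.choose k) * ((j + k).choose k)) := by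
      intro k _
      rw [pow_add]
      ring
    rw [Finset.sum_congr rfl h1, ← Finset.mul_sum, alt_sum_B m j]
    ring
  rw [Finset.sum_congr rfl h, ← Finset.mul_sum, alt_sum_A n m]
  by_cases hnm : n = m
  · subst hnm
    have hpow : ((-1 : ℝ)) ^ (n + n) = 1 := Even.neg_one_pow ⟨n, rfl⟩
    simp [← pow_add, hpow]
  · simp [hnm]

/-- The Laguerre polynomial of degree `n`:
`L_n(x) = ∑_{k=0}^{n} (n choose k)·(-x)^k / k!`. -/
noncomputable def laguerre (n : ℕ) (x : ℝ) : ℝ :=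
  ∑ k ∈ Finset.range (n + 1), (n.choose k : ℝ) * (-x) ^ k / (k.factorial : ℝ)

/-- The Log-Orthogonal Functions `S_n^γ(x) = L_n(-(γ+1)·log x)` are orthogonal
in `L²((0,1), x^γ dx)` with constant norm `1/(γ+1)`. -/
theorem stmt_12 (γ : ℝ) (hγ : -1 < γ) (n m : ℕ) :
    ∫ x in Set.Ioo (0 : ℝ) 1,
        laguerre n (-(γ + 1) * Real.log x) * laguerre m (-(γ + 1) * Real.log x)
          * x ^ γ =
      if n = m then 1 / (γ + 1) else 0 := by
  have hr : (0 : ℝ) < γ + 1 := by linarith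
  -- the substitution x = exp (-t)
  have himg : (fun t : ℝ => Real.exp (-t)) '' Set.Ioi 0 = Set.Ioo 0 1 := by
    ext x
    simp only [Set.mem_image, Set.mem_Ioi, Set.mem_Ioo]
    constructor
    · rintro ⟨t, ht, rfl⟩
      refine ⟨Real.exp_pos _, ?_⟩
      rw [← Real.exp_zero]
      exact Real.exp_lt_exp.2 (by linarith)
    · rintro ⟨hx0, hx1⟩
      exact ⟨-Real.log x, by simpa using Real.log_neg hx0 hx1,
        by rw [neg_neg, Real.exp_log hx0]⟩
  have hderiv : ∀ t ∈ Set.Ioi (0 : ℝ),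
      HasDerivWithinAt (fun t : ℝ => Real.exp (-t)) (-Real.exp (-t)) (Set.Ioi 0) t := by
    intro t _
    have h := (hasDerivAt_neg t).exp
    have h2 : Real.exp (-t) * -1 = -Real.exp (-t) := by ring
    exact (h2 ▸ h).hasDerivWithinAt
  have hinj : Set.InjOn (fun t : ℝ => Real.exp (-t)) (Set.Ioi 0) := by
    intro a _ b _ hab
    have := Real.exp_injective hab
    linarith [neg_injective this]
  -- integrability on Ioi 0
  have hIntIoi : ∀ N : ℕ, IntegrableOn
      (fun t : ℝ => t ^ N * Real.exp (-((γ + 1) * t))) (Set.Ioi 0) := by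
    intro N
    have hN : (-1 : ℝ) < N := by
      have := Nat.cast_nonneg (α := ℝ) N
      linarith
    have h := integrableOn_rpow_mul_exp_neg_mul_rpow (p := 1) (s := N) (b := γ + 1) hN one_pos hr
    refine h.congr_fun (fun t ht => ?_) measurableSet_Ioi
    dsimp only
    rw [Real.rpow_natCast, Real.rpow_one, neg_mul]
  -- pointwise form of the substituted integrand
  have heq : ∀ N : ℕ, ∀ t : ℝ,
      Real.exp (-t) * ((Real.log (Real.exp (-t))) ^ N * (Real.exp (-t)) ^ γ)
        = (-1 : ℝ) ^ N * (t ^ N * Real.exp (-((γ + 1) * t))) := by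
    intro N t
    rw [Real.log_exp, ← Real.exp_mul]
    rw [show Real.exp (-t) * ((-t) ^ N * Real.exp (-t * γ))
        = (-t) ^ N * (Real.exp (-t) * Real.exp (-t * γ)) from by ring, ← Real.exp_add]
    rw [show -t + -t * γ = -((γ + 1) * t) by ring, neg_pow]
    ring
  -- integrability on Ioo 0 1
  have hIntIoo : ∀ N : ℕ, IntegrableOn
      (fun x : ℝ => (Real.log x) ^ N * x ^ γ) (Set.Ioo 0 1) := by
    intro N
    rw [← himg, integrableOn_image_iff_integrableOn_abs_deriv_smul
      measurableSet_Ioi hderiv hinj]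
    have h2 : IntegrableOn (fun t : ℝ => (-1 : ℝ) ^ N * (t ^ N * Real.exp (-((γ + 1) * t))))
        (Set.Ioi 0) := (hIntIoi N).const_mul ((-1 : ℝ) ^ N)
    exact h2.congr_fun
      (fun t ht => by rw [abs_neg, abs_of_pos (Real.exp_pos _), smul_eq_mul, heq N t])
      measurableSet_Ioi
  -- change of variables formula
  have hsub : ∀ g : ℝ → ℝ, ∫ x in Set.Ioo (0 : ℝ) 1, g x
      = ∫ t in Set.Ioi (0 : ℝ), Real.exp (-t) * g (Real.exp (-t)) := by
    intro g
    rw [← himg, integral_image_eq_integral_abs_deriv_smul measurableSet_Ioi hderiv hinj]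
    refine setIntegral_congr_fun measurableSet_Ioi fun t ht => ?_
    rw [abs_neg, abs_of_pos (Real.exp_pos _), smul_eq_mul]
  -- the moments
  have hMoment : ∀ N : ℕ, ∫ x in Set.Ioo (0 : ℝ) 1, (Real.log x) ^ N * x ^ γ
      = (-1 : ℝ) ^ N * N.factorial / (γ + 1) ^ (N + 1) := by
    intro N
    rw [hsub (fun x => (Real.log x) ^ N * x ^ γ)]
    rw [setIntegral_congr_fun measurableSet_Ioi (fun t ht => heq N t)]
    rw [integral_const_mul]
    have hrw : ∀ t ∈ Set.Ioi (0 : ℝ), t ^ N * Real.exp (-((γ + 1) * t))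
        = t ^ (((N : ℝ) + 1) - 1) * Real.exp (-((γ + 1) * t)) := by
      intro t ht
      rw [show ((N : ℝ) + 1) - 1 = (N : ℝ) by ring, Real.rpow_natCast]
    rw [setIntegral_congr_fun measurableSet_Ioi hrw,
      Real.integral_rpow_mul_exp_neg_mul_Ioi (by positivity) hr]
    rw [Real.Gamma_nat_eq_factorial]
    rw [show ((N : ℝ) + 1) = ((N + 1 : ℕ) : ℝ) from by push_cast; ring, Real.rpow_natCast]
    have hne : ((γ + 1) : ℝ) ^ (N + 1) ≠ 0 := pow_ne_zero _ (ne_of_gt hr)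
    field_simp
    rw [← mul_pow, one_div, inv_mul_cancel₀ (ne_of_gt hr), one_pow]
  -- expand the product of Laguerre polynomials
  have hexp : ∀ x : ℝ,
      laguerre n (-(γ + 1) * Real.log x) * laguerre m (-(γ + 1) * Real.log x) * x ^ γ
        = ∑ j ∈ range (n + 1), ∑ k ∈ range (m + 1),
            ((n.choose j : ℝ) * (m.choose k) * (γ + 1) ^ (j + k)
              / (j.factorial * k.factorial)) * ((Real.log x) ^ (j + k) * x ^ γ) := by
    intro x
    unfold laguerre
    rw [Finset.sum_mul_sum, Finset.sum_mul]
    refine Finset.sum_congr rfl fun j hj => ?_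
    rw [Finset.sum_mul]
    refine Finset.sum_congr rfl fun k hk => ?_
    rw [show -(-(γ + 1) * Real.log x) = (γ + 1) * Real.log x from by ring,
      mul_pow, mul_pow, pow_add, pow_add]
    ring
  simp only [hexp]
  have hIntTerm : ∀ (j k : ℕ) (c : ℝ), IntegrableOn
      (fun x : ℝ => c * ((Real.log x) ^ (j + k) * x ^ γ)) (Set.Ioo 0 1) :=
    fun j k c => (hIntIoo (j + k)).const_mul c
  rw [integral_finset_sum _ (fun j _ => integrable_finset_sum _ (fun k _ => hIntTerm j k _))]
  have hin : ∀ j ∈ range (n + 1),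
      (∫ x in Set.Ioo (0 : ℝ) 1, ∑ k ∈ range (m + 1),
          ((n.choose j : ℝ) * (m.choose k) * (γ + 1) ^ (j + k)
            / (j.factorial * k.factorial)) * ((Real.log x) ^ (j + k) * x ^ γ))
        = ∑ k ∈ range (m + 1),
            ((-1 : ℝ) ^ (j + k) * (n.choose j) * (m.choose k) * ((j + k).choose k))
              * (1 / (γ + 1)) := by
    intro j _
    rw [integral_finset_sum _ (fun k _ => hIntTerm j k _)]
    refine Finset.sum_congr rfl fun k _ => ?_
    rw [integral_const_mul, hMoment (j + k)]
    have hfac : (((j + k).factorial : ℝ)) = ((j + k).choose k) * j.factorial * k.factorial := by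
      exact_mod_cast (Nat.add_choose_mul_factorial_mul_factorial j k).symm
    have hj0 : (j.factorial : ℝ) ≠ 0 := Nat.cast_ne_zero.2 j.factorial_ne_zero
    have hk0 : (k.factorial : ℝ) ≠ 0 := Nat.cast_ne_zero.2 k.factorial_ne_zero
    rw [hfac, pow_succ]
    field_simp
  rw [Finset.sum_congr rfl hin]
  have hout : ∀ j ∈ range (n + 1),
      ∑ k ∈ range (m + 1),
          ((-1 : ℝ) ^ (j + k) * (n.choose j) * (m.choose k) * ((j + k).choose k))
            * (1 / (γ + 1))
        = (∑ k ∈ range (m + 1),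
            (-1 : ℝ) ^ (j + k) * (n.choose j) * (m.choose k) * ((j + k).choose k))
              * (1 / (γ + 1)) := fun j _ => (Finset.sum_mul _ _ _).symm
  rw [Finset.sum_congr rfl hout, ← Finset.sum_mul, key_identity n m]
  split_ifs <;> simp
end

section
/- Let σ > −4 be a real number and let L_n denote the Laguerre polynomial of degree n. Then for every natural number n: ∫₀¹ x^{σ+3}·L_n(−5·log x) dx = ((σ − 1)/(σ + 4))^n / (σ + 4). In particular, the expansion coefficients of the power function x^σ against the Generalized Log-Orthogonal Functions S_n^{(4,2)}(x) = x·L_n(−5·log x) in the weighted space L²((0,1), x² dx) decay geometrically with ratio |σ − 1|/(σ + 4). -/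
open MeasureTheory Real Set

lemma exp_neg_image' : (fun t : ℝ => Real.exp (-t)) '' Set.Ioi 0 = Set.Ioo 0 1 := by
  ext x
  simp only [mem_image, mem_Ioi, mem_Ioo]
  constructor
  · rintro ⟨t, ht, rfl⟩
    exact ⟨Real.exp_pos _, Real.exp_lt_one_iff.mpr (by linarith)⟩
  · rintro ⟨hx0, hx1⟩
    exact ⟨-Real.log x, by simpa using Real.log_neg hx0 hx1, by simp [Real.exp_log hx0]⟩

lemma exp_neg_deriv' : ∀ t ∈ Set.Ioi (0:ℝ),
    HasDerivWithinAt (fun t : ℝ => Real.exp (-t)) (-Real.exp (-t)) (Set.Ioi 0) t := by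
  intro t _
  simpa [Function.comp_def] using ((Real.hasDerivAt_exp (-t)).comp t (hasDerivAt_neg t)).hasDerivWithinAt

lemma exp_neg_inj' : Set.InjOn (fun t : ℝ => Real.exp (-t)) (Set.Ioi 0) := by
  intro a _ b _ h
  simpa using Real.exp_injective h

lemma cov (g : ℝ → ℝ) :
    ∫ x in Set.Ioo (0:ℝ) 1, g x
      = ∫ t in Set.Ioi (0:ℝ), Real.exp (-t) * g (Real.exp (-t)) := by
  rw [← exp_neg_image',
    integral_image_eq_integral_abs_deriv_smul measurableSet_Ioi exp_neg_deriv' exp_neg_inj' g]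
  simp [abs_of_pos (Real.exp_pos _)]

lemma cov_int (g : ℝ → ℝ) :
    IntegrableOn g (Set.Ioo (0:ℝ) 1) ↔
      IntegrableOn (fun t => Real.exp (-t) * g (Real.exp (-t))) (Set.Ioi (0:ℝ)) := by
  rw [← exp_neg_image',
    integrableOn_image_iff_integrableOn_abs_deriv_smul measurableSet_Ioi exp_neg_deriv'
      exp_neg_inj' g]
  simp [abs_of_pos (Real.exp_pos _)]

lemma integrand_eq (a : ℝ) (k : ℕ) : ∀ t ∈ Set.Ioi (0:ℝ),
    Real.exp (-t) * (Real.exp (-t) ^ a * Real.log (Real.exp (-t)) ^ k)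
      = (-1)^k * (t ^ ((k:ℝ) + 1 - 1) * Real.exp (-((a+1)*t))) := by
  intro t ht
  have h1 : Real.exp (-t) ^ a = Real.exp (-t * a) := by
    rw [Real.rpow_def_of_pos (Real.exp_pos _), Real.log_exp]
  have h2 : ((k:ℝ) + 1 - 1) = (k:ℝ) := by ring
  have h3 : Real.exp (-((a+1)*t)) = Real.exp (-t) * Real.exp (-t * a) := by
    rw [← Real.exp_add]; ring_nf
  rw [h1, h2, Real.log_exp, Real.rpow_natCast, neg_pow, h3]
  ring

lemma key_integral (a : ℝ) (ha : 0 < a + 1) (k : ℕ) :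
    ∫ x in Set.Ioo (0:ℝ) 1, x ^ a * Real.log x ^ k
      = (-1)^k * (k.factorial : ℝ) / (a+1)^(k+1) := by
  rw [cov (fun x => x ^ a * Real.log x ^ k)]
  rw [setIntegral_congr_fun measurableSet_Ioi (integrand_eq a k), integral_const_mul,
    integral_rpow_mul_exp_neg_mul_Ioi (by positivity) ha]
  rw [show ((k:ℝ) + 1) = ((k+1 : ℕ) : ℝ) by push_cast; ring, Real.rpow_natCast]
  rw [show ((k+1 : ℕ) : ℝ) = (k:ℝ) + 1 by push_cast; ring, Real.Gamma_nat_eq_factorial,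
    div_pow, one_pow]
  field_simp

lemma key_integrable (a : ℝ) (ha : 0 < a + 1) (k : ℕ) :
    IntegrableOn (fun x => x ^ a * Real.log x ^ k) (Set.Ioo (0:ℝ) 1) := by
  rw [cov_int]
  have base : IntegrableOn (fun t : ℝ => t ^ (k:ℝ) * Real.exp (-(a+1) * t ^ (1:ℝ)))
      (Set.Ioi 0) :=
    integrableOn_rpow_mul_exp_neg_mul_rpow
      (lt_of_lt_of_le (by norm_num) (Nat.cast_nonneg k)) one_pos ha
  refine IntegrableOn.congr_fun (base.const_mul ((-1:ℝ)^k)) ?_ measurableSet_Ioi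
  intro t ht
  simp only
  rw [integrand_eq a k t ht]
  have h2 : ((k:ℝ) + 1 - 1) = (k:ℝ) := by ring
  rw [h2, Real.rpow_one]
  ring_nf


/-- Expansion coefficients of `x^σ` against the GLOFs
`S_n^{(4,2)}(x) = x·L_n(-5·log x)` in `L²((0,1), x² dx)`:
`∫₀¹ x^{σ+3}·L_n(-5·log x) dx = ((σ-1)/(σ+4))^n / (σ+4)` for `σ > -4`;
they decay geometrically with ratio `|σ-1|/(σ+4)`. -/
theorem stmt_13 (σ : ℝ) (hσ : -4 < σ) (n : ℕ) :
    ∫ x in Set.Ioo (0 : ℝ) 1, x ^ (σ + 3) * laguerre n (-5 * Real.log x) =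
      ((σ - 1) / (σ + 4)) ^ n / (σ + 4) := by
  have h4 : (0:ℝ) < σ + 4 := by linarith
  have h31 : (0:ℝ) < σ + 3 + 1 := by linarith
  have hrw : ∀ x ∈ Set.Ioo (0:ℝ) 1, x ^ (σ+3) * laguerre n (-5 * Real.log x)
      = ∑ k ∈ Finset.range (n+1),
          ((n.choose k : ℝ) * 5^k / (k.factorial : ℝ)) * (x ^ (σ+3) * Real.log x ^ k) := by
    intro x _
    unfold laguerre
    rw [Finset.mul_sum]
    refine Finset.sum_congr rfl fun k _ => ?_
    rw [show -(-5 * Real.log x) = 5 * Real.log x by ring, mul_pow]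
    ring
  rw [setIntegral_congr_fun measurableSet_Ioo hrw]
  rw [MeasureTheory.integral_finset_sum _
    (fun k _ => (key_integrable (σ+3) h31 k).const_mul _)]
  simp_rw [integral_const_mul, key_integral (σ+3) h31]
  rw [div_pow, div_div, ← pow_succ, eq_div_iff (by positivity)]
  rw [Finset.sum_mul]
  rw [show σ - 1 = -5 + (σ+4) by ring]
  rw [add_pow (-5 : ℝ) (σ+4) n]
  refine Finset.sum_congr rfl fun k hk => ?_
  have hk' : k ≤ n := Nat.lt_succ_iff.mp (Finset.mem_range.mp hk)
  have hsplit : (σ+4)^(n+1) = (σ+3+1)^(k+1) * (σ+4)^(n-k) := by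
    rw [show σ+3+1 = σ+4 by ring, ← pow_add]
    congr 1
    omega
  rw [hsplit, show ((-5:ℝ))^k = (-1)^k*5^k from by rw [neg_pow]]
  have hkf : (k.factorial : ℝ) ≠ 0 := Nat.cast_ne_zero.mpr k.factorial_ne_zero
  have hp : ((σ+3+1):ℝ)^(k+1) ≠ 0 := by positivity
  field_simp
end
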